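/- Theorem 3 (residual compensation dominates direct truncation, explicit form): Let W be a real n×n matrix and S an invertible real n×n matrix. Suppose WS = U Σ Vᵀ is a singular value decomposition (U, V orthogonal n×n, Σ with Σᵢⱼ = σᵢ if i = j and 0 otherwise, σ₀ ≥ σ₁ ≥ … ≥ 0). For natural numbers r_i ≤ r ≤ n, define W_{r_i} = U Σ_{r_i} Vᵀ S⁻¹ (intermediate approximation) and W_r = U Σ_r Vᵀ S⁻¹ (direct truncation), where Σ_k keeps the diagonal entries σᵢ with i < k and zeroes the rest. Set r_r = r − r_i, let R = W − W_{r_i}, and let R_{r_r} be a best rank-r_r approximation of R in Frobenius norm. Then the residual-compensated matrix Ŵ_r = W_{r_i} + R_{r_r} satisfies ‖W − Ŵ_r‖_F² ≤ ‖W − W_r‖_F². -/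

import Mathlib

open Matrix

/-- The Frobenius norm of a real matrix: `sqrt (∑ i j, (M i j)^2)`. -/
noncomputable def frobNorm {n m : ℕ} (M : Matrix (Fin n) (Fin m) ℝ) : ℝ :=
  Real.sqrt (∑ i, ∑ j, (M i j) ^ 2)

/-!
Write `Σ_k` for the truncation of `Σ` to its first `k` diagonal entries. The direct truncation
differs from the intermediate approximation by `W_r - W_{r_i} = U (Σ_r - Σ_{r_i}) Vᵀ S⁻¹`, and
`Σ_r - Σ_{r_i}` is diagonal with at most `r - r_i` nonzero entries, so `W_r - W_{r_i}` is a
competitor of rank at most `r - r_i` for approximating the residual `R = W - W_{r_i}`. Since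
`W - W_r = R - (W_r - W_{r_i})` and `W - Ŵ_r = R - R_{r_r}`, optimality of `R_{r_r}` gives the
inequality.
-/

namespace Matrix

variable {K : Type*} {n : ℕ}

/-- The paper's `Σ_k`. -/
def truncatedDiagonal [Zero K] (σ : ℕ → K) (k : ℕ) : Matrix (Fin n) (Fin n) K :=
  diagonal fun i => if (i : ℕ) < k then σ i else 0

theorem of_ite_eq_truncatedDiagonal [Zero K] (σ : ℕ → K) (k : ℕ) :
    (of fun i j : Fin n => if (i : ℕ) = (j : ℕ) ∧ (i : ℕ) < k then σ i else 0) =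
      truncatedDiagonal σ k := by
  ext i j
  by_cases h : i = j <;> simp [truncatedDiagonal, h, Fin.val_inj]

theorem card_val_mem_Ico_le (a b : ℕ) :
    Fintype.card {i : Fin n // (i : ℕ) ∈ Finset.Ico a b} ≤ b - a := by
  calc Fintype.card {i : Fin n // (i : ℕ) ∈ Finset.Ico a b}
      ≤ Fintype.card (Finset.Ico a b) :=
        Fintype.card_le_of_injective (fun i => ⟨i.1, i.2⟩)
          fun i j h => Subtype.ext (Fin.ext (congrArg Subtype.val h))
    _ = b - a := by rw [Fintype.card_coe, Nat.card_Ico]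

theorem rank_truncatedDiagonal_sub_le [Field K] (σ : ℕ → K) {a b : ℕ} (hab : a ≤ b) :
    (truncatedDiagonal σ b - truncatedDiagonal σ a : Matrix (Fin n) (Fin n) K).rank ≤ b - a := by
  classical
  rw [truncatedDiagonal, truncatedDiagonal, diagonal_sub, rank_diagonal]
  refine le_trans (Fintype.card_subtype_mono _ _ fun i hi => ?_) (card_val_mem_Ico_le a b)
  simp only [Finset.mem_Ico]
  split_ifs at hi <;> first | omega | simp at hi

end Matrix

theorem erc_svd_dominates_direct_truncation_general {n : ℕ}
    (W S U V : Matrix (Fin n) (Fin n) ℝ)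
    (σ : ℕ → ℝ)
    (ri r : ℕ) (hri : ri ≤ r)
    (Wri Wr : Matrix (Fin n) (Fin n) ℝ)
    (hWri : Wri = U * (Matrix.of fun (i j : Fin n) =>
      if (i : ℕ) = (j : ℕ) ∧ (i : ℕ) < ri then σ (i : ℕ) else 0) * Vᵀ * S⁻¹)
    (hWr : Wr = U * (Matrix.of fun (i j : Fin n) =>
      if (i : ℕ) = (j : ℕ) ∧ (i : ℕ) < r then σ (i : ℕ) else 0) * Vᵀ * S⁻¹)
    (Rrr : Matrix (Fin n) (Fin n) ℝ)
    (hRbest : ∀ X : Matrix (Fin n) (Fin n) ℝ, X.rank ≤ r - ri →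
      frobNorm ((W - Wri) - Rrr) ≤ frobNorm ((W - Wri) - X)) :
    frobNorm (W - (Wri + Rrr)) ^ 2 ≤ frobNorm (W - Wr) ^ 2 := by
  rw [of_ite_eq_truncatedDiagonal] at hWri hWr
  have hgap : (Wr - Wri).rank ≤ r - ri :=
    calc (Wr - Wri).rank
        = (U * (truncatedDiagonal σ r - truncatedDiagonal σ ri) * Vᵀ * S⁻¹).rank := by
          rw [hWr, hWri, Matrix.mul_sub, Matrix.sub_mul, Matrix.sub_mul]
      _ ≤ (U * (truncatedDiagonal σ r - truncatedDiagonal σ ri)).rank :=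
          (rank_mul_le_left _ _).trans (rank_mul_le_left _ _)
      _ ≤ (truncatedDiagonal σ r - truncatedDiagonal σ ri).rank := rank_mul_le_right _ _
      _ ≤ r - ri := rank_truncatedDiagonal_sub_le σ hri
  have hcompensated : W - (Wri + Rrr) = (W - Wri) - Rrr := by abel
  have hdirect : W - Wr = (W - Wri) - (Wr - Wri) := by abel
  rw [hcompensated, hdirect]
  exact pow_le_pow_left₀ (Real.sqrt_nonneg _) (hRbest _ hgap) 2

/-- **Theorem 3, explicit form** (residual compensation dominates direct
truncation): given an SVD `WS = U Σ Vᵀ`, the intermediate approximation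
`W_{r_i} = U Σ_{r_i} Vᵀ S⁻¹`, the direct truncation `W_r = U Σ_r Vᵀ S⁻¹`, and a
best rank-`(r − r_i)` Frobenius approximation `R_{r_r}` of the residual
`R = W − W_{r_i}`, the residual-compensated matrix `Ŵ_r = W_{r_i} + R_{r_r}`
satisfies `‖W − Ŵ_r‖_F² ≤ ‖W − W_r‖_F²`. -/
theorem erc_svd_dominates_direct_truncation {n : ℕ}
    (W S Sig U V : Matrix (Fin n) (Fin n) ℝ)
    (hS : IsUnit S.det)
    (σ : ℕ → ℝ)
    (hU : Uᵀ * U = 1) (hU' : U * Uᵀ = 1)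
    (hV : Vᵀ * V = 1) (hV' : V * Vᵀ = 1)
    (hSig : ∀ (i j : Fin n), Sig i j = if (i : ℕ) = (j : ℕ) then σ (i : ℕ) else 0)
    (hmono : ∀ i : ℕ, i + 1 < n → σ (i + 1) ≤ σ i)
    (hnonneg : ∀ i : ℕ, i < n → 0 ≤ σ i)
    (hWS : W * S = U * Sig * Vᵀ)
    (ri r : ℕ) (hri : ri ≤ r) (hr : r ≤ n)
    (Wri Wr : Matrix (Fin n) (Fin n) ℝ)
    (hWri : Wri = U * (Matrix.of fun (i j : Fin n) =>
      if (i : ℕ) = (j : ℕ) ∧ (i : ℕ) < ri then σ (i : ℕ) else 0) * Vᵀ * S⁻¹)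
    (hWr : Wr = U * (Matrix.of fun (i j : Fin n) =>
      if (i : ℕ) = (j : ℕ) ∧ (i : ℕ) < r then σ (i : ℕ) else 0) * Vᵀ * S⁻¹)
    (Rrr : Matrix (Fin n) (Fin n) ℝ)
    (hRrank : Rrr.rank ≤ r - ri)
    (hRbest : ∀ X : Matrix (Fin n) (Fin n) ℝ, X.rank ≤ r - ri →
      frobNorm ((W - Wri) - Rrr) ≤ frobNorm ((W - Wri) - X)) :
    frobNorm (W - (Wri + Rrr)) ^ 2 ≤ frobNorm (W - Wr) ^ 2 :=
  erc_svd_dominates_direct_truncation_general W S U V σ ri r hri Wri Wr hWri hWr Rrr hRbest
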